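/- arXiv:1308.3810 — 3 statements merged into one kernel-verified Lean document; each statement's English description precedes it below -/
import Mathlib

section
/- If u is a sequence with r distinct letters, then every binary (r,s)-formation contains u if and only if s ≥ fw(u), where fw(u) is the formation width of u. -/
/-!
If every binary `(r,s)`-formation contains `u`, then so does every `(R,s)`-formation for `R`
large: applying Erdős–Szekeres (in the Ramsey form: `2^(a+b)` distinct letters contain an
increasing run of `a` or a decreasing run of `b`) once per permutation yields `r` letters on
which every permutation is increasing or decreasing, and restricting to them leaves a binary
`(r,s)`-formation. Conversely, a binary `(r,s)`-formation with pattern `p^{±1} p^{±1} ⋯` is,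
up to renaming letters, the restriction of the `(R,s)`-formation with the same pattern over
`0, …, R-1` to the `r` letters of an occurrence of `u`. Here `R` exists because the set
defining `fw u` is nonempty: every `(r, |u|)`-formation contains `u`, its `i`-th letter being
taken from the `i`-th permutation.
-/

/-- The increasing sequence `1 2 ... c`. -/
def Ic (c : ℕ) : List ℕ := List.range' 1 c

/-- The decreasing sequence `c (c-1) ... 1`. -/
def Dc (c : ℕ) : List ℕ := (Ic c).reverse

/-- `k` concatenated copies of the list `l`. -/
def rep (l : List ℕ) (k : ℕ) : List ℕ := (List.replicate k l).flatten

/-- `up(c,t)`: the sequence `1 2 ... c` repeated `t` times. -/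
def upSeq (c t : ℕ) : List ℕ := rep (Ic c) t

/-- `alt(c,k)`: the concatenation of `k` permutations alternating `I_c, D_c, I_c, ...`. -/
def altSeq (c k : ℕ) : List ℕ :=
  ((List.range k).map (fun i => if i % 2 = 0 then Ic c else Dc c)).flatten

/-- A sequence `s` contains `u` if some subsequence of `s` is obtained from `u`
by an injective renaming of its letters. -/
def Contains (s u : List ℕ) : Prop :=
  ∃ f : ℕ → ℕ, Function.Injective f ∧ (u.map f).Sublist s

/-- `F` is an `(r,s)`-formation: a concatenation of `s` permutations of a set of
`r` distinct letters. -/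
def IsFormation (r s : ℕ) (F : List ℕ) : Prop :=
  ∃ (A : Finset ℕ) (ps : List (List ℕ)), A.card = r ∧ ps.length = s ∧
    (∀ p ∈ ps, p.Nodup ∧ p.toFinset = A) ∧ F = ps.flatten

/-- `F` is a binary `(r,s)`-formation: an `(r,s)`-formation in which every
constituent permutation equals a fixed permutation `p` or its reverse. -/
def IsBinaryFormation (r s : ℕ) (F : List ℕ) : Prop :=
  ∃ (A : Finset ℕ) (p : List ℕ) (ps : List (List ℕ)), A.card = r ∧
    p.Nodup ∧ p.toFinset = A ∧ ps.length = s ∧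
    (∀ q ∈ ps, q = p ∨ q = p.reverse) ∧ F = ps.flatten

/-- The formation width of `u`: the minimum `s` such that there exists `r` for which
every `(r,s)`-formation contains `u`. -/
noncomputable def fw (u : List ℕ) : ℕ :=
  sInf {s | ∃ r, ∀ F, IsFormation r s F → Contains F u}

/-- The formation length of `u`: the minimum `r` such that every `(r, fw u)`-formation
contains `u`. -/
noncomputable def fl (u : List ℕ) : ℕ :=
  sInf {r | ∀ F, IsFormation r (fw u) F → Contains F u}

/-- For a permutation `π` of `{1,...,c}`, the sequence `I_π = π(1) π(2) ... π(c)`. -/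
def Iperm {c : ℕ} (π : Equiv.Perm (Fin c)) : List ℕ :=
  List.ofFn (fun i => (π i).val + 1)

/-- `l(u)` for a sequence `u` on letters `1,...,c`: the smallest `k` such that
`up(c,k)` contains `u`. -/
noncomputable def lval (c : ℕ) (u : List ℕ) : ℕ := sInf {k | Contains (upSeq c k) u}

/-- `r(u)` for a sequence `u` on letters `1,...,c`: the smallest `k` such that
`alt(c,k)` contains `u`. -/
noncomputable def rval (c : ℕ) (u : List ℕ) : ℕ := sInf {k | Contains (altSeq c k) u}

/-- The binary formation `I_c^{e_1} D_c^{e_2} I_c^{e_3} ...` determined by the list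
of exponents `e` (blocks alternate starting with `I_c`). -/
def altBlocks (c : ℕ) (e : List ℕ) : List ℕ :=
  (((List.range e.length).zip e).map (fun p => rep (if p.1 % 2 = 0 then Ic c else Dc c) p.2)).flatten


open Function List

theorem Set.InjOn.exists_injective_eqOn {α : Type*} {g : α → α} {S : Set α} (hS : S.Finite)
    (hg : Set.InjOn g S) : ∃ h : α → α, Injective h ∧ Set.EqOn h g S := by
  classical
  have : Finite {x | x ∈ S} := hS.to_subtype
  let e := hg.bijOn_image.equiv
  exact ⟨e.extendSubtype, e.extendSubtype.injective,
    fun x hx => by rw [Equiv.extendSubtype_apply_of_mem _ x hx]; rfl⟩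

theorem List.Sublist.filter_mem_eq_self {α : Type*} [DecidableEq α] {t l : List α}
    (h : t <+ l) (hl : l.Nodup) : l.filter (· ∈ t) = t := by
  induction h with
  | slnil => rfl
  | @cons t l a h ih =>
    have ha : a ∉ t := fun hat => (nodup_cons.1 hl).1 (h.subset hat)
    rw [filter_cons_of_neg (by simpa using ha), ih hl.of_cons]
  | @cons_cons t l a h ih =>
    have hl' : ∀ y ∈ l, y ≠ a := fun y hy hya => (nodup_cons.1 hl).1 (hya ▸ hy)
    rw [filter_cons_of_pos (by simp), ← ih hl.of_cons]
    congr 1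
    exact filter_congr fun y hy => by simp [hl' y hy, hy]

theorem List.exists_injOn_map_eq {α β : Type*} [DecidableEq α] [Inhabited β] {l : List α}
    {l' : List β} (hl : l.Nodup) (hl' : l'.Nodup) (hlen : l.length = l'.length) :
    ∃ g : α → β, Set.InjOn g {x | x ∈ l} ∧ l.map g = l' := by
  refine ⟨fun x => l'.getD (l.idxOf x) default, ?_, ?_⟩
  · intro x hx y hy hxy
    have hx' : l.idxOf x < l'.length := hlen ▸ idxOf_lt_length_iff.2 hx
    have hy' : l.idxOf y < l'.length := hlen ▸ idxOf_lt_length_iff.2 hy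
    simp only [getD_eq_getElem _ _ hx', getD_eq_getElem _ _ hy'] at hxy
    exact (idxOf_inj hx).1 (hl'.getElem_inj_iff.1 hxy)
  · refine ext_getElem (by rw [length_map, hlen]) fun i hi hi' => ?_
    rw [getElem_map, hl.idxOf_getElem, getD_eq_getElem _ _ hi']

theorem List.sublist_flatten_of_forall_mem {α : Type*} :
    ∀ {v : List α} {qs : List (List α)}, v.length ≤ qs.length →
      (∀ x ∈ v, ∀ q ∈ qs, x ∈ q) → v <+ qs.flatten
  | [], _, _, _ => nil_sublist _
  | _ :: _, [], hlen, _ => by simp at hlen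
  | x :: v, q :: qs, hlen, hmem => by
    rw [flatten_cons, ← singleton_append]
    exact (singleton_sublist.2 (hmem x mem_cons_self q mem_cons_self)).append
      (sublist_flatten_of_forall_mem (by simpa using hlen)
        fun y hy q' hq' => hmem y (mem_cons_of_mem _ hy) q' (mem_cons_of_mem _ hq'))

theorem List.exists_sublist_pairwise_lt_or_gt {α : Type*} [LinearOrder α] :
    ∀ (a b : ℕ) {l : List α}, l.Nodup → 2 ^ (a + b) ≤ l.length →
      ∃ t, t <+ l ∧
        (a ≤ t.length ∧ t.Pairwise (· < ·) ∨ b ≤ t.length ∧ t.Pairwise (· > ·))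
  | 0, _, _, _, _ => ⟨[], nil_sublist _, .inl ⟨le_rfl, .nil⟩⟩
  | _, 0, _, _, _ => ⟨[], nil_sublist _, .inr ⟨le_rfl, .nil⟩⟩
  | _ + 1, _ + 1, [], _, hlen => by simp at hlen
  | a + 1, b + 1, x :: l, hnd, hlen => by
    obtain ⟨hx, hl⟩ := nodup_cons.1 hnd
    have hsplit : l.length = (l.filter (x < ·)).length + (l.filter (· < x)).length := by
      rw [length_eq_length_filter_add (x < ·)]
      congr 2
      refine filter_congr fun y hy => ?_
      have : y ≠ x := fun h => hx (h ▸ hy)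
      rcases this.lt_or_gt with h | h <;> simp [h, h.not_gt]
    have hgt : ∀ y ∈ l.filter (x < ·), x < y := fun y hy => by simpa using (mem_filter.1 hy).2
    have hlt : ∀ y ∈ l.filter (· < x), y < x := fun y hy => by simpa using (mem_filter.1 hy).2
    have hpow : 2 ^ (a + 1 + (b + 1)) = 2 ^ (a + (b + 1)) + 2 ^ (a + 1 + b) := by
      rw [show a + 1 + (b + 1) = a + (b + 1) + 1 by omega, show a + 1 + b = a + (b + 1) by omega,
        pow_succ]
      ring
    by_cases hG : 2 ^ (a + (b + 1)) ≤ (l.filter (x < ·)).length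
    · obtain ⟨t, ht, hinc | hdec⟩ :=
        exists_sublist_pairwise_lt_or_gt a (b + 1) (hl.sublist filter_sublist) hG
      · exact ⟨x :: t, (ht.trans filter_sublist).cons_cons x,
          .inl ⟨by simpa using hinc.1,
            pairwise_cons.2 ⟨fun y hy => hgt y (ht.subset hy), hinc.2⟩⟩⟩
      · exact ⟨t, (ht.trans filter_sublist).cons x, .inr hdec⟩
    · have hL : 2 ^ (a + 1 + b) ≤ (l.filter (· < x)).length := by
        simp only [length_cons] at hlen
        omega
      obtain ⟨t, ht, hinc | hdec⟩ :=
        exists_sublist_pairwise_lt_or_gt (a + 1) b (hl.sublist filter_sublist) hL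
      · exact ⟨t, (ht.trans filter_sublist).cons x, .inl hinc⟩
      · exact ⟨x :: t, (ht.trans filter_sublist).cons_cons x,
          .inr ⟨by simpa using hdec.1,
            pairwise_cons.2 ⟨fun y hy => hlt y (ht.subset hy), hdec.2⟩⟩⟩

theorem Contains.mono {F G u : List ℕ} (h : Contains F u) (hFG : F <+ G) : Contains G u :=
  let ⟨f, hf, hsub⟩ := h
  ⟨f, hf, hsub.trans hFG⟩

theorem contains_of_injOn {F u : List ℕ} {g : ℕ → ℕ} (hg : Set.InjOn g {x | x ∈ u})
    (hsub : u.map g <+ F) : Contains F u := by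
  obtain ⟨f, hf, hfg⟩ := hg.exists_injective_eqOn u.finite_toSet
  exact ⟨f, hf, by rwa [map_congr_left fun x hx => hfg hx]⟩

theorem Contains.map {F u : List ℕ} (h : Contains F u) {g : ℕ → ℕ}
    (hg : Set.InjOn g {x | x ∈ F}) : Contains (F.map g) u := by
  obtain ⟨f, hf, hsub⟩ := h
  have hfF : ∀ x ∈ u, f x ∈ F := fun x hx => hsub.subset (mem_map_of_mem hx)
  refine contains_of_injOn (g := g ∘ f)
    (fun x hx y hy hxy => hf (hg (hfF x hx) (hfF y hy) hxy)) ?_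
  rw [← map_map]
  exact hsub.map g

theorem Contains.exists_filter {F u : List ℕ} (h : Contains F u) :
    ∃ B : Finset ℕ, B.card = u.toFinset.card ∧ ↑B ⊆ {x | x ∈ F} ∧
      Contains (F.filter (· ∈ B)) u := by
  obtain ⟨f, hf, hsub⟩ := h
  refine ⟨u.toFinset.image f, Finset.card_image_of_injective _ hf, ?_, f, hf, ?_⟩
  · intro y hy
    obtain ⟨x, hx, rfl⟩ := Finset.mem_image.1 hy
    exact hsub.subset (mem_map_of_mem (mem_toFinset.1 hx))
  · have hfilter : (u.map f).filter (· ∈ u.toFinset.image f) = u.map f :=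
      filter_eq_self.2 fun y hy => by
        obtain ⟨x, hx, rfl⟩ := mem_map.1 hy
        simpa using ⟨x, hx, rfl⟩
    exact hfilter ▸ hsub.filter _

theorem IsFormation.exists_sublist {r s t : ℕ} {F : List ℕ} (hF : IsFormation r s F)
    (hts : t ≤ s) : ∃ F', F' <+ F ∧ IsFormation r t F' := by
  obtain ⟨A, ps, hA, hlen, hps, rfl⟩ := hF
  refine ⟨(ps.take t).flatten, ?_, A, ps.take t, hA, by simp [hlen, hts],
    fun q hq => hps q (mem_of_mem_take hq), rfl⟩
  conv_rhs => rw [← take_append_drop t ps, flatten_append]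
  exact sublist_append_left _ _

theorem contains_of_isFormation_length {u F : List ℕ}
    (hF : IsFormation u.toFinset.card u.length F) : Contains F u := by
  obtain ⟨A, ps, hA, hlen, hps, rfl⟩ := hF
  obtain ⟨g, hg, hgA⟩ := exists_injOn_map_eq (u.toFinset.sort_nodup (· ≤ ·))
    (A.sort_nodup (· ≤ ·)) (by simp [hA])
  have hgA' : ∀ x ∈ u, g x ∈ A := fun x hx =>
    (Finset.mem_sort _).1 (hgA ▸ mem_map_of_mem ((Finset.mem_sort _).2 (mem_toFinset.2 hx)))
  refine contains_of_injOn (hg.mono fun x hx => by simpa using hx) ?_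
  refine sublist_flatten_of_forall_mem (by simp [hlen]) fun y hy q hq => ?_
  obtain ⟨x, hx, rfl⟩ := mem_map.1 hy
  simpa [← (hps q hq).2] using hgA' x hx

theorem fw_le_iff (u : List ℕ) (s : ℕ) :
    fw u ≤ s ↔ ∃ r, ∀ F, IsFormation r s F → Contains F u := by
  refine ⟨fun hfw => ?_, fun hs => Nat.sInf_le hs⟩
  obtain ⟨r, hr⟩ := Nat.sInf_mem (s := {s | ∃ r, ∀ F, IsFormation r s F → Contains F u})
    ⟨u.length, u.toFinset.card, fun F => contains_of_isFormation_length⟩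
  refine ⟨r, fun F hF => ?_⟩
  obtain ⟨F', hF'F, hF'⟩ := hF.exists_sublist hfw
  exact (hr F' hF').mono hF'F

def IsMonoOn (q : List ℕ) (B : Finset ℕ) : Prop :=
  (q.filter (· ∈ B)).Pairwise (· < ·) ∨ (q.filter (· ∈ B)).Pairwise (· > ·)

theorem IsMonoOn.mono {q : List ℕ} {B B' : Finset ℕ} (h : IsMonoOn q B) (hB : B' ⊆ B) :
    IsMonoOn q B' := by
  have hsub : q.filter (· ∈ B') <+ q.filter (· ∈ B) :=
    q.monotone_filter_right fun x hx => by simpa using hB (by simpa using hx)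
  exact h.imp (·.sublist hsub) (·.sublist hsub)

theorem exists_isMonoOn {q : List ℕ} (hq : q.Nodup) {C : Finset ℕ} (hC : ↑C ⊆ {x | x ∈ q})
    {r : ℕ} (hcard : 2 ^ (r + r) ≤ C.card) : ∃ B ⊆ C, B.card = r ∧ IsMonoOn q B := by
  have hlen : (q.filter (· ∈ C)).length = C.card := by
    rw [← toFinset_card_of_nodup (hq.filter _)]
    congr 1
    ext x
    simpa using fun hx => hC hx
  obtain ⟨t, ht, hmono⟩ :=
    exists_sublist_pairwise_lt_or_gt r r (hq.filter _) (hlen ▸ hcard)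
  have htq : q.filter (· ∈ t.toFinset) = t := by
    simpa using (ht.trans filter_sublist).filter_mem_eq_self hq
  have htC : t.toFinset ⊆ C := fun x hx => by
    simpa using (mem_filter.1 (ht.subset (mem_toFinset.1 hx))).2
  have htr : r ≤ t.toFinset.card := by
    rw [toFinset_card_of_nodup ((hq.filter _).sublist ht)]
    exact hmono.elim (·.1) (·.1)
  obtain ⟨B, hBt, hB⟩ := Finset.exists_subset_card_eq htr
  refine ⟨B, hBt.trans htC, hB, IsMonoOn.mono ?_ hBt⟩
  rw [IsMonoOn, htq]
  exact hmono.imp (·.2) (·.2)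

def monoBound : ℕ → ℕ → ℕ
  | 0, r => r
  | s + 1, r => monoBound s (2 ^ (r + r))

theorem exists_isMonoOn_forall {A : Finset ℕ} :
    ∀ {qs : List (List ℕ)} {r : ℕ}, (∀ q ∈ qs, q.Nodup ∧ q.toFinset = A) →
      monoBound qs.length r ≤ A.card → ∃ B ⊆ A, B.card = r ∧ ∀ q ∈ qs, IsMonoOn q B
  | [], _, _, hA => by
    obtain ⟨B, hBA, hB⟩ := Finset.exists_subset_card_eq hA
    exact ⟨B, hBA, hB, by simp⟩
  | q :: qs, r, hqs, hA => by
    obtain ⟨C, hCA, hC, hmonoC⟩ :=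
      exists_isMonoOn_forall (fun q' hq' => hqs q' (mem_cons_of_mem _ hq')) hA
    obtain ⟨hq, hqA⟩ := hqs q mem_cons_self
    obtain ⟨B, hBC, hB, hmonoB⟩ := exists_isMonoOn hq
      (fun x hx => by simpa [← hqA] using hCA hx) hC.ge
    exact ⟨B, hBC.trans hCA, hB, forall_mem_cons.2
      ⟨hmonoB, fun q' hq' => (hmonoC q' hq').mono hBC⟩⟩

theorem isBinaryFormation_filter {A B : Finset ℕ} {ps : List (List ℕ)}
    (hps : ∀ q ∈ ps, q.Nodup ∧ q.toFinset = A) (hBA : B ⊆ A)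
    (hmono : ∀ q ∈ ps, IsMonoOn q B) :
    IsBinaryFormation B.card ps.length (ps.flatten.filter (· ∈ B)) := by
  refine ⟨B, B.sort, ps.map (filter (· ∈ B)), rfl, B.sort_nodup _, B.sort_toFinset _,
    length_map _, fun q' hq' => ?_, filter_flatten⟩
  obtain ⟨q, hq, rfl⟩ := mem_map.1 hq'
  have hqB : (q.filter (· ∈ B)).toFinset = B := by
    ext x
    simpa [← (hps q hq).2] using fun hx => hBA hx
  have hnd : (q.filter (· ∈ B)).Nodup := (hps q hq).1.filter _
  rcases hmono q hq with hinc | hdec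
  · have hsort := (toFinset_sort (· ≤ ·) hnd).2 (hinc.imp le_of_lt)
    rw [hqB] at hsort
    exact .inl hsort.symm
  · have hsort := (toFinset_sort (· ≤ ·) (nodup_reverse.2 hnd)).2
      (pairwise_reverse.2 (hdec.imp le_of_lt))
    rw [toFinset_reverse, hqB] at hsort
    exact .inr (by rw [hsort, reverse_reverse])

theorem fw_le_of_forall_isBinaryFormation {u : List ℕ} {r s : ℕ}
    (H : ∀ F, IsBinaryFormation r s F → Contains F u) : fw u ≤ s := by
  refine Nat.sInf_le ⟨monoBound s r, ?_⟩
  rintro F ⟨A, ps, hA, hlen, hps, rfl⟩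
  obtain ⟨B, hBA, hB, hmono⟩ := exists_isMonoOn_forall hps (by rw [hlen, hA])
  have hbin := isBinaryFormation_filter hps hBA hmono
  rw [hB, hlen] at hbin
  exact (H _ hbin).mono filter_sublist

def binaryFormation (p : List ℕ) (ε : List Bool) : List ℕ :=
  (ε.map fun b => if b then p else p.reverse).flatten

theorem IsBinaryFormation.exists_eq_binaryFormation {r s : ℕ} {F : List ℕ}
    (hF : IsBinaryFormation r s F) :
    ∃ p ε, p.Nodup ∧ p.length = r ∧ ε.length = s ∧ F = binaryFormation p ε := by
  obtain ⟨A, p, ps, hA, hp, hpA, hlen, hps, rfl⟩ := hF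
  refine ⟨p, ps.map (· = p), hp, by rw [← hA, ← hpA, toFinset_card_of_nodup hp],
    by rw [length_map, hlen], ?_⟩
  rw [binaryFormation, map_map]
  congr 1
  refine (map_congr_left fun q hq => ?_).trans (map_id ps) |>.symm
  by_cases h : q = p
  · simp [h]
  · simp [(hps q hq).resolve_left h, eq_comm]

theorem isFormation_binaryFormation {p : List ℕ} (hp : p.Nodup) (ε : List Bool) :
    IsFormation p.length ε.length (binaryFormation p ε) := by
  refine ⟨p.toFinset, _, toFinset_card_of_nodup hp, length_map _, fun q hq => ?_, rfl⟩
  obtain ⟨b, -, rfl⟩ := mem_map.1 hq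
  cases b <;> simp [hp]

theorem filter_binaryFormation (P : ℕ → Bool) (p : List ℕ) (ε : List Bool) :
    (binaryFormation p ε).filter P = binaryFormation (p.filter P) ε := by
  simp only [binaryFormation, filter_flatten, map_map]
  congr 1
  exact map_congr_left fun b _ => by cases b <;> simp

theorem map_binaryFormation (g : ℕ → ℕ) (p : List ℕ) (ε : List Bool) :
    (binaryFormation p ε).map g = binaryFormation (p.map g) ε := by
  simp only [binaryFormation, map_flatten, map_map]
  congr 1
  exact map_congr_left fun b _ => by cases b <;> simp

theorem mem_of_mem_binaryFormation {p : List ℕ} {ε : List Bool} {x : ℕ}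
    (hx : x ∈ binaryFormation p ε) : x ∈ p := by
  obtain ⟨q, hq, hxq⟩ := mem_flatten.1 hx
  obtain ⟨b, -, rfl⟩ := mem_map.1 hq
  cases b <;> simp_all

theorem contains_of_fw_le {u : List ℕ} {r s : ℕ} (h : u.toFinset.card = r) (hfw : fw u ≤ s)
    {F : List ℕ} (hF : IsBinaryFormation r s F) : Contains F u := by
  obtain ⟨r', hr'⟩ := (fw_le_iff u s).1 hfw
  obtain ⟨p, ε, hp, hpr, rfl, rfl⟩ := hF.exists_eq_binaryFormation
  have hG := hr' _ (length_range (n := r') ▸ isFormation_binaryFormation nodup_range ε)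
  obtain ⟨B, hB, hBG, hGB⟩ := hG.exists_filter
  rw [filter_binaryFormation] at hGB
  set bs := (range r').filter (· ∈ B)
  have hbs : bs.Nodup := nodup_range.filter _
  have hbslen : bs.length = r := by
    rw [← toFinset_card_of_nodup hbs, ← h, ← hB]
    congr 1
    ext x
    simpa [bs] using fun hx => mem_range.1 (mem_of_mem_binaryFormation (hBG hx))
  obtain ⟨g, hg, hbsg⟩ := exists_injOn_map_eq hbs hp (hbslen.trans hpr.symm)
  simpa [map_binaryFormation, hbsg] using
    hGB.map (hg.mono fun x hx => mem_of_mem_binaryFormation hx)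

theorem stmt2 (u : List ℕ) (r : ℕ) (h : u.toFinset.card = r) (s : ℕ) :
    (∀ F, IsBinaryFormation r s F → Contains F u) ↔ fw u ≤ s :=
  ⟨fw_le_of_forall_isBinaryFormation, fun hfw _ hF => contains_of_fw_le h hfw hF⟩
end

section
/- If u is a nonempty sequence and v is obtained from u by inserting a single occurrence of a letter that does not occur in u, then fw(u) = fw(v). -/
open Finset
open scoped List

namespace List

variable {α : Type*}

theorem exists_mem_head?_of_mem_head?_flatten {L : List (List α)} {a : α}
    (h : a ∈ L.flatten.head?) : ∃ l ∈ L, a ∈ l.head? := by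
  rw [head?_flatten] at h
  exact exists_of_findSome?_eq_some h

theorem exists_mem_getLast?_of_mem_getLast?_flatten {L : List (List α)} {a : α}
    (h : a ∈ L.flatten.getLast?) : ∃ l ∈ L, a ∈ l.getLast? := by
  rw [getLast?_flatten] at h
  obtain ⟨l, hl, h⟩ := exists_of_findSome?_eq_some h
  exact ⟨l, mem_reverse.mp hl, h⟩

theorem exists_infix_or_mem_head?_of_pair_infix_flatten {L : List (List α)} {a b : α}
    (h : [a, b] <:+: L.flatten) :
    (∃ l ∈ L, [a, b] <:+: l) ∨ ∃ l ∈ L, b ∈ l.head? := by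
  induction L with
  | nil => simpa using h.length_le
  | cons l L ih =>
    rw [flatten_cons, infix_append_iff_ne_nil] at h
    rcases h with h | h | ⟨l₁, l₂, h₁, h₂, hl, -, hpre⟩
    · exact .inl ⟨l, mem_cons_self, h⟩
    · rcases ih h with ⟨l', hl', h⟩ | ⟨l', hl', h⟩
      · exact .inl ⟨l', mem_cons_of_mem _ hl', h⟩
      · exact .inr ⟨l', mem_cons_of_mem _ hl', h⟩
    · obtain rfl : l₂ = [b] := by rcases l₁ with _ | ⟨x, _ | ⟨y, l₁⟩⟩ <;> simp_all
      obtain ⟨l', hl', h⟩ := exists_mem_head?_of_mem_head?_flatten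
        (singleton_prefix_iff_head?_eq_some.mp hpre)
      exact .inr ⟨l', mem_cons_of_mem _ hl', h⟩

theorem count_flatten_le_length [BEq α] [LawfulBEq α] {L : List (List α)}
    (hL : ∀ l ∈ L, l.Nodup) (a : α) : L.flatten.count a ≤ L.length := by
  rw [count_flatten]
  simpa using sum_le_card_nsmul (L.map (count a)) 1 (by
    simpa using fun l hl => nodup_iff_count_le_one.mp (hL l hl) a)

theorem exists_append_cons_sublist_of_isolated {p : α → Prop} [DecidablePred p] {F : List α}
    (hF : F ≠ []) (hhead : ∀ c ∈ F.head?, ¬ p c) (hlast : ∀ c ∈ F.getLast?, ¬ p c)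
    (hadj : ∀ a b, [a, b] <:+: F → p a → ¬ p b) {w₁ w₂ : List α}
    (hw : w₁ ++ w₂ <+ F.filter p) : ∃ c, ¬ p c ∧ w₁ ++ c :: w₂ <+ F := by
  obtain ⟨L₁, L₂, hL, hw₁, hw₂⟩ := append_sublist_iff.mp hw
  obtain ⟨F₁, F₂, rfl, rfl, rfl⟩ := filter_eq_append_iff.mp hL
  suffices ∃ c, ¬ p c ∧ F₁.filter p ++ c :: F₂.filter p <+ F₁ ++ F₂ by
    obtain ⟨c, hc, h⟩ := this
    exact ⟨c, hc, (hw₁.append (hw₂.cons_cons c)).trans h⟩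
  have hmid : ∀ {G₁ G₂ : List α} {c},
      G₁.filter p ++ c :: G₂.filter p <+ G₁ ++ c :: G₂ :=
    filter_sublist.append (filter_sublist.cons_cons _)
  rcases eq_nil_or_concat F₁ with rfl | ⟨F₁, a, rfl⟩ <;> rcases F₂ with _ | ⟨b, F₂⟩
  · simp at hF
  · have hb : ¬ p b := hhead b (by simp)
    exact ⟨b, hb, by simp [hb]⟩
  · have ha : ¬ p a := hlast a (by simp)
    exact ⟨a, ha, by simp [ha]⟩
  · by_cases ha : p a
    · have hb : ¬ p b := hadj a b ⟨F₁, F₂, by simp⟩ ha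
      exact ⟨b, hb, by simpa [hb] using hmid (G₁ := F₁ ++ [a])⟩
    · exact ⟨a, ha, by simpa [ha] using hmid (G₁ := F₁) (G₂ := b :: F₂)⟩

variable [DecidableEq α]

def succs : List α → α → Finset α
  | a :: b :: l, c => (if a = c then {b} else ∅) ∪ succs (b :: l) c
  | _, _ => ∅

theorem mem_succs {l : List α} {a b : α} : b ∈ l.succs a ↔ [a, b] <:+: l := by
  induction l with
  | nil => simp [succs]
  | cons x l ih =>
    cases l with
    | nil => simpa [succs] using fun h => by simpa using h.length_le
    | cons y l =>
      rw [succs, Finset.mem_union, ih, infix_cons_iff (l₂ := y :: l)]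
      split_ifs <;> simp_all [eq_comm]

theorem card_succs_le (l : List α) (a : α) : #(l.succs a) ≤ l.count a := by
  induction l with
  | nil => simp [succs]
  | cons x l ih =>
    cases l with
    | nil => simp [succs]
    | cons y l =>
      rw [succs, count_cons]
      refine (card_union_le _ _).trans (add_le_add ?_ ih |>.trans_eq (add_comm _ _))
      split_ifs <;> simp_all

def neighbors (l : List α) (a : α) : Finset α := l.succs a ∪ l.reverse.succs a

theorem mem_neighbors {l : List α} {a b : α} :
    b ∈ l.neighbors a ↔ [a, b] <:+: l ∨ [b, a] <:+: l := by
  rw [neighbors, Finset.mem_union, mem_succs, mem_succs]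
  exact Iff.rfl.or (reverse_infix (l₁ := [b, a]))

theorem card_neighbors_le (l : List α) (a : α) : #(l.neighbors a) ≤ 2 * l.count a := by
  have := card_succs_le l.reverse a
  rw [count_reverse] at this
  exact (card_union_le _ _).trans (by have := card_succs_le l a; omega)

def blockEnds (L : List (List α)) : Finset α :=
  (L.filterMap head?).toFinset ∪ (L.filterMap getLast?).toFinset

theorem card_blockEnds_le (L : List (List α)) : #L.blockEnds ≤ 2 * L.length := by
  have h₁ := (toFinset_card_le (L.filterMap head?)).trans (length_filterMap_le _ L)
  have h₂ := (toFinset_card_le (L.filterMap getLast?)).trans (length_filterMap_le _ L)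
  exact (card_union_le _ _).trans (by omega)

theorem mem_blockEnds_of_mem_head? {L : List (List α)} {a : α} {l : List α} (hl : l ∈ L)
    (h : a ∈ l.head?) : a ∈ L.blockEnds :=
  Finset.mem_union_left _ (mem_toFinset.mpr (mem_filterMap.mpr ⟨l, hl, h⟩))

theorem mem_blockEnds_of_mem_getLast? {L : List (List α)} {a : α} {l : List α} (hl : l ∈ L)
    (h : a ∈ l.getLast?) : a ∈ L.blockEnds :=
  Finset.mem_union_right _ (mem_toFinset.mpr (mem_filterMap.mpr ⟨l, hl, h⟩))

theorem mem_blockEnds_of_mem_head?_flatten {L : List (List α)} {a : α}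
    (h : a ∈ L.flatten.head?) : a ∈ L.blockEnds :=
  let ⟨_, hl, h⟩ := exists_mem_head?_of_mem_head?_flatten h
  mem_blockEnds_of_mem_head? hl h

theorem mem_blockEnds_of_mem_getLast?_flatten {L : List (List α)} {a : α}
    (h : a ∈ L.flatten.getLast?) : a ∈ L.blockEnds :=
  let ⟨_, hl, h⟩ := exists_mem_getLast?_of_mem_getLast?_flatten h
  mem_blockEnds_of_mem_getLast? hl h

theorem mem_blockEnds_of_pair_infix_flatten {L : List (List α)} (hL : ∀ l ∈ L, l.Nodup)
    {a : α} (h : [a, a] <:+: L.flatten) : a ∈ L.blockEnds := by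
  rcases exists_infix_or_mem_head?_of_pair_infix_flatten h with ⟨l, hl, h⟩ | ⟨l, hl, h⟩
  · exact absurd ((hL l hl).sublist h.sublist) (by simp)
  · exact mem_blockEnds_of_mem_head? hl h

end List

theorem exists_independent_subset_of_degree_le {α : Type*} [DecidableEq α]
    (N : α → Finset α) (hsymm : ∀ a b, b ∈ N a → a ∈ N b) {d : ℕ} (r : ℕ) {S : Finset α}
    (hloop : ∀ a ∈ S, a ∉ N a) (hdeg : ∀ a ∈ S, #(N a) ≤ d) (hcard : r * (d + 1) ≤ #S) :
    ∃ B ⊆ S, #B = r ∧ ∀ a ∈ B, ∀ b ∈ B, b ∉ N a := by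
  induction r generalizing S with
  | zero => exact ⟨∅, by simp⟩
  | succ r ih =>
    obtain ⟨a, ha⟩ : S.Nonempty := card_pos.mp (by nlinarith)
    have hcard' : r * (d + 1) ≤ #(S \ insert a (N a)) := by
      have := le_card_sdiff (insert a (N a)) S
      have := (card_insert_le a (N a)).trans (Nat.succ_le_succ (hdeg a ha))
      rw [Nat.succ_mul] at hcard
      omega
    obtain ⟨B, hBS, hB, hBind⟩ := ih (fun b hb => hloop b (mem_sdiff.mp hb).1)
      (fun b hb => hdeg b (mem_sdiff.mp hb).1) hcard'
    have hfar : ∀ b ∈ B, b ≠ a ∧ b ∉ N a := fun b hb => by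
      simpa [not_or] using (mem_sdiff.mp (hBS hb)).2
    refine ⟨insert a B, insert_subset ha (hBS.trans sdiff_subset), ?_, ?_⟩
    · rw [card_insert_of_notMem fun h => (hfar a h).1 rfl, hB]
    · simp only [mem_insert, forall_eq_or_imp]
      exact ⟨⟨hloop a ha, fun b hb => (hfar b hb).2⟩,
        fun b hb => ⟨fun h => (hfar b hb).2 (hsymm b a h), hBind b hb⟩⟩

theorem Contains.of_sublist {F u v : List ℕ} (h : Contains F v) (huv : u <+ v) : Contains F u :=
  let ⟨f, hf, hv⟩ := h
  ⟨f, hf, (huv.map f).trans hv⟩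

theorem contains_append_cons_of_sublist {F u₁ u₂ : List ℕ} {f : ℕ → ℕ} {x c : ℕ}
    (hf : Function.Injective f) (hx : x ∉ u₁ ++ u₂) (hc : c ∉ (u₁ ++ u₂).map f)
    (h : u₁.map f ++ c :: u₂.map f <+ F) : Contains F (u₁ ++ x :: u₂) := by
  set g := Equiv.swap (f x) c ∘ f
  have hfix : ∀ a ∈ u₁ ++ u₂, g a = f a := fun a ha =>
    Equiv.swap_apply_of_ne_of_ne (hf.ne (by rintro rfl; exact hx ha))
      (by rintro h; exact hc (h ▸ List.mem_map_of_mem ha))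
  refine ⟨g, (Equiv.injective _).comp hf, ?_⟩
  rw [List.map_append, List.map_cons,
    List.map_congr_left fun a ha => hfix a (List.mem_append_left _ ha),
    List.map_congr_left fun a ha => hfix a (List.mem_append_right _ ha)]
  simpa [g] using h

theorem isFormation_filter_flatten {A B : Finset ℕ} {ps : List (List ℕ)}
    (hps : ∀ p ∈ ps, p.Nodup ∧ p.toFinset = A) (hBA : B ⊆ A) :
    IsFormation #B ps.length (ps.flatten.filter (· ∈ B)) := by
  refine ⟨B, ps.map (List.filter (· ∈ B)), rfl, List.length_map _, ?_, List.filter_flatten⟩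
  simp only [List.mem_map, forall_exists_index, and_imp, forall_apply_eq_imp_iff₂]
  refine fun p hp => ⟨(hps p hp).1.filter _, ?_⟩
  rw [List.toFinset_filter, (hps p hp).2]
  simpa using Finset.filter_mem_eq_inter.trans (inter_eq_right.mpr hBA)

theorem forall_isFormation_contains_append_cons {u₁ u₂ : List ℕ} {x r s : ℕ}
    (hu : u₁ ++ u₂ ≠ []) (hx : x ∉ u₁ ++ u₂)
    (hr : ∀ F, IsFormation r s F → Contains F (u₁ ++ u₂)) :
    ∀ F, IsFormation (r * (2 * s + 1) + 2 * s) s F → Contains F (u₁ ++ x :: u₂) := by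
  rintro F ⟨A, ps, hA, rfl, hps, rfl⟩
  set E := ps.blockEnds
  have hnd : ∀ p ∈ ps, p.Nodup := fun p hp => (hps p hp).1
  have hsymm : ∀ a b, b ∈ ps.flatten.neighbors a → a ∈ ps.flatten.neighbors b :=
    fun a b h => List.mem_neighbors.mpr (List.mem_neighbors.mp h).symm
  have hloop : ∀ a ∈ A \ E, a ∉ ps.flatten.neighbors a := fun a ha h =>
    (mem_sdiff.mp ha).2 (List.mem_blockEnds_of_pair_infix_flatten hnd
      (by simpa using List.mem_neighbors.mp h))
  have hdeg : ∀ a ∈ A \ E, #(ps.flatten.neighbors a) ≤ 2 * ps.length := fun a _ =>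
    (List.card_neighbors_le _ a).trans (by have := List.count_flatten_le_length hnd a; omega)
  have hcard : r * (2 * ps.length + 1) ≤ #(A \ E) := by
    have := le_card_sdiff E A
    have : #E ≤ 2 * ps.length := List.card_blockEnds_le ps
    omega
  obtain ⟨B, hBS, rfl, hBind⟩ :=
    exists_independent_subset_of_degree_le _ hsymm r hloop hdeg hcard
  have hBE : ∀ a ∈ E, a ∉ B := fun a ha hB => (mem_sdiff.mp (hBS hB)).2 ha
  obtain ⟨f, hf, hsub⟩ := hr _ (isFormation_filter_flatten hps (hBS.trans sdiff_subset))
  have hne : ps.flatten ≠ [] := fun h => hu (by simpa [h] using hsub)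
  obtain ⟨c, hcB, hc⟩ := List.exists_append_cons_sublist_of_isolated hne
    (fun a ha => hBE a (List.mem_blockEnds_of_mem_head?_flatten ha))
    (fun a ha => hBE a (List.mem_blockEnds_of_mem_getLast?_flatten ha))
    (fun a b hab ha hb => hBind a ha b hb (List.mem_neighbors.mpr (.inl hab)))
    (by rwa [← List.map_append])
  refine contains_append_cons_of_sublist hf hx (fun hcf => hcB ?_) hc
  simpa using (List.mem_filter.mp (hsub.subset hcf)).2

theorem stmt5_general (u : List ℕ) (x i : ℕ) (hu : u ≠ []) (hx : x ∉ u) :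
    fw u = fw (u.take i ++ x :: u.drop i) := by
  have hu' : u.take i ++ u.drop i ≠ [] := by rwa [List.take_append_drop]
  have hx' : x ∉ u.take i ++ u.drop i := by rwa [List.take_append_drop]
  have hsub : u <+ u.take i ++ x :: u.drop i := by
    conv_lhs => rw [← List.take_append_drop i u]
    exact (List.sublist_cons_self x _).append_left _
  unfold fw
  congr 1
  ext s
  refine ⟨fun ⟨r, hr⟩ => ⟨r * (2 * s + 1) + 2 * s, ?_⟩,
    fun ⟨r, hr⟩ => ⟨r, fun F hF => (hr F hF).of_sublist hsub⟩⟩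
  exact forall_isFormation_contains_append_cons hu' hx' (by rwa [List.take_append_drop])

theorem stmt5 (u : List ℕ) (x i : ℕ) (hu : u ≠ []) (hi : i ≤ u.length) (hx : x ∉ u) :
    fw u = fw (u.take i ++ x :: u.drop i) :=
  stmt5_general u x i hu hx
end

section
/- Let c ≥ 2, let u = I_c^{e_1} D_c^{e_2} I_c^{e_3} ... L_c^{e_n} with all e_i > 0 (L = I if n is odd, D if n is even), and let k = e_1 + ... + e_n. Then for every index m, fw(u) ≤ c(k - e_m) + 2 e_m - 1. -/
/-! Among sufficiently many letters, iterating the Erdős–Szekeres argument once per permutation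
yields `c` letters `L` such that every permutation of the formation lists them in the order `L`
or in the reverse order. Every permutation then contains every letter of `L`, so all blocks of
`u` other than the `m`-th are embedded spending one permutation per letter, i.e.
`c (k - e_m)` permutations. The `m`-th block gets a window of `2 e_m - 1` consecutive
permutations; one of the two orders of `L` occurs in at least `e_m` of them, and the renaming
of `1, …, c` onto `L` is oriented so that the `m`-th block has that order. -/

open List

theorem exists_sublist_pairwise_or_pairwise_not {α : Type*} (r : α → α → Prop) :
    ∀ (a b : ℕ) (l : List α), (a + b).choose a ≤ l.length →
      ∃ l', l' <+ l ∧ ((l'.length = a ∧ l'.Pairwise r) ∨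
        (l'.length = b ∧ l'.Pairwise fun x y => ¬r x y))
  | 0, _, _, _ => ⟨[], nil_sublist _, .inl ⟨rfl, .nil⟩⟩
  | _ + 1, 0, _, _ => ⟨[], nil_sublist _, .inr ⟨rfl, .nil⟩⟩
  | a + 1, b + 1, [], h => absurd h (Nat.choose_pos (by omega)).not_ge
  | a + 1, b + 1, x :: l, h => by
    classical
    set P := l.filter fun y => r x y
    set Q := l.filter fun y => ¬r x y
    have hPQ : P.length + Q.length = l.length := by
      simpa [P, Q, ← countP_eq_length_filter] using
        (length_eq_countP_add_countP (fun y => decide (r x y)) (l := l)).symm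
    have hpascal : (a + 1 + (b + 1)).choose (a + 1) =
        (a + (b + 1)).choose a + (a + 1 + b).choose (a + 1) := by
      rw [show a + 1 + (b + 1) = a + b + 1 + 1 by omega, Nat.choose_succ_succ,
        show a + (b + 1) = a + b + 1 by omega, show a + 1 + b = a + b + 1 by omega]
    simp only [length_cons, hpascal] at h
    by_cases hP : (a + (b + 1)).choose a ≤ P.length
    · obtain ⟨l', hl', ⟨hlen, hpw⟩ | hnot⟩ :=
        exists_sublist_pairwise_or_pairwise_not r a (b + 1) P hP
      · refine ⟨x :: l', (hl'.trans filter_sublist).cons_cons x, .inl ⟨by simp [hlen], ?_⟩⟩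
        exact pairwise_cons.2 ⟨fun y hy => by simpa using of_mem_filter (hl'.subset hy), hpw⟩
      · exact ⟨l', (hl'.trans filter_sublist).cons x, .inr hnot⟩
    · obtain ⟨l', hl', hnot | ⟨hlen, hpw⟩⟩ :=
        exists_sublist_pairwise_or_pairwise_not r (a + 1) b Q (by omega)
      · exact ⟨l', (hl'.trans filter_sublist).cons x, .inl hnot⟩
      · refine ⟨x :: l', (hl'.trans filter_sublist).cons_cons x, .inr ⟨by simp [hlen], ?_⟩⟩
        exact pairwise_cons.2 ⟨fun y hy => by simpa using of_mem_filter (hl'.subset hy), hpw⟩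
termination_by a b => a + b

section Orientation

variable {α : Type*} [DecidableEq α]

theorem List.Nodup.pairwise_idxOf_lt {q : List α} (hq : q.Nodup) :
    q.Pairwise fun x y => q.idxOf x < q.idxOf y := by
  rw [pairwise_iff_getElem]
  intro i j hi hj hij
  rwa [hq.idxOf_getElem, hq.idxOf_getElem]

theorem sublist_of_pairwise_idxOf_lt {v q : List α} (hq : q.Nodup) (hvq : v ⊆ q)
    (hv : v.Pairwise fun x y => q.idxOf x < q.idxOf y) : v <+ q := by
  have hvnd : v.Nodup := hv.imp fun h hxy => by subst hxy; exact lt_irrefl _ h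
  obtain ⟨w, hwv, hwq⟩ := subperm_of_subset hvnd hvq
  have hw : w = v :=
    hwv.eq_of_pairwise (fun _ _ _ _ h₁ h₂ => absurd (h₁.trans h₂) (lt_irrefl _))
      (hq.pairwise_idxOf_lt.sublist hwq) hv
  exact hw ▸ hwq

theorem exists_sublist_sublist_or_reverse_sublist {M q : List α} (hM : M.Nodup) (hq : q.Nodup)
    (hMq : M ⊆ q) {t : ℕ} (ht : (t + t).choose t ≤ M.length) :
    ∃ M', M' <+ M ∧ M'.length = t ∧ (M' <+ q ∨ M'.reverse <+ q) := by
  obtain ⟨M', hM', hcol⟩ :=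
    exists_sublist_pairwise_or_pairwise_not (fun x y => q.idxOf x < q.idxOf y) t t M ht
  have hM'q : M' ⊆ q := Subset.trans hM'.subset hMq
  refine ⟨M', hM', ?_⟩
  rcases hcol with ⟨hlen, hpw⟩ | ⟨hlen, hpw⟩
  · exact ⟨hlen, .inl (sublist_of_pairwise_idxOf_lt hq hM'q hpw)⟩
  · refine ⟨hlen, .inr (sublist_of_pairwise_idxOf_lt hq (by simpa using hM'q) ?_)⟩
    rw [pairwise_reverse]
    refine (hpw.and (hM.sublist hM')).imp_of_mem fun hx _ ⟨hnlt, hne⟩ => ?_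
    have := (idxOf_inj (hM'q hx)).not.mpr hne
    omega

theorem exists_sublist_forall_sublist_or_reverse_sublist (c : ℕ) :
    ∀ (qs : List (List α)) {M : List α}, M.Nodup →
      (fun n => (n + n).choose n)^[qs.length] c ≤ M.length →
      (∀ q ∈ qs, q.Nodup ∧ M ⊆ q) →
      ∃ L, L <+ M ∧ L.length = c ∧ ∀ q ∈ qs, L <+ q ∨ L.reverse <+ q
  | [], M, _, hM, _ => ⟨M.take c, take_sublist _ _, by simpa using hM, by simp⟩
  | q :: qs, M, hMnd, hM, hqs => by
    rw [length_cons, Function.iterate_succ_apply'] at hM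
    obtain ⟨hqnd, hMq⟩ := hqs q mem_cons_self
    obtain ⟨M', hM', hlen, hM'q⟩ := exists_sublist_sublist_or_reverse_sublist hMnd hqnd hMq hM
    obtain ⟨L, hL, hLlen, hLqs⟩ := exists_sublist_forall_sublist_or_reverse_sublist c qs
      (hMnd.sublist hM') hlen.ge fun q' hq' =>
        have ⟨hq'nd, hMq'⟩ := hqs q' (mem_cons_of_mem _ hq')
        ⟨hq'nd, Subset.trans hM'.subset hMq'⟩
    refine ⟨L, hL.trans hM', hLlen, forall_mem_cons.2 ⟨?_, hLqs⟩⟩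
    rcases hM'q with h | h
    · exact .inl (hL.trans h)
    · exact .inr ((reverse_sublist.2 hL).trans h)

end Orientation

theorem flatten_sublist_flatten_of_forall_sublist {α : Type*} :
    ∀ {ls qs : List (List α)}, ls.length ≤ qs.length →
      (∀ l ∈ ls, ∀ q ∈ qs, l <+ q) → ls.flatten <+ qs.flatten
  | [], _, _, _ => nil_sublist _
  | _ :: _, [], hlen, _ => absurd hlen (by simp)
  | l :: ls, q :: qs, hlen, h => by
    simp only [flatten_cons]
    refine (h l mem_cons_self q mem_cons_self).append
      (flatten_sublist_flatten_of_forall_sublist (by simpa using hlen) ?_)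
    exact fun l' hl' q' hq' => h l' (mem_cons_of_mem _ hl') q' (mem_cons_of_mem _ hq')

theorem sublist_flatten_of_forall_subset {α : Type*} {v : List α} {qs : List (List α)}
    (hlen : v.length ≤ qs.length) (h : ∀ q ∈ qs, v ⊆ q) : v <+ qs.flatten := by
  simpa [← flatMap_def] using flatten_sublist_flatten_of_forall_sublist (ls := v.map ([·]))
    (qs := qs) (by simpa using hlen) (by simpa using fun x hx q hq => h q hq hx)

theorem rep_sublist_flatten {V : List ℕ} {a : ℕ} {qs : List (List ℕ)}
    (ha : a ≤ (qs.filter (V <+ ·)).length) : rep V a <+ qs.flatten :=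
  (flatten_sublist_flatten_of_forall_sublist (by simpa using ha)
    fun l hl q hq => by simpa [eq_of_mem_replicate hl] using (mem_filter.1 hq).2).trans
    filter_sublist.flatten

theorem map_rep (f : ℕ → ℕ) (l : List ℕ) (k : ℕ) : (rep l k).map f = rep (l.map f) k := by
  simp [rep, map_flatten, map_replicate]

theorem length_rep (l : List ℕ) (k : ℕ) : (rep l k).length = k * l.length := by
  simp [rep, length_flatten, map_replicate]

def blocks (p q : List ℕ) : List ℕ → List ℕ
  | [] => []
  | a :: e => rep p a ++ blocks q p e

theorem altBlocks_eq_blocks (c : ℕ) (e : List ℕ) : altBlocks c e = blocks (Ic c) (Dc c) e := by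
  let pat (i : ℕ) := if i % 2 = 0 then Ic c else Dc c
  suffices h : ∀ i, (((range' i e.length).zip e).map fun p => rep (pat p.1) p.2).flatten =
      blocks (pat i) (pat (i + 1)) e by
    simpa [altBlocks, range_eq_range', pat] using h 0
  induction e with
  | nil => simp [blocks]
  | cons a e ih =>
    intro i
    have hpat : pat (i + 1 + 1) = pat i := by simp only [pat, Nat.add_assoc, Nat.add_mod_right]
    rw [length_cons, range'_succ, zip_cons_cons, map_cons, flatten_cons, ih, hpat, blocks]

theorem map_blocks (f : ℕ → ℕ) (p q e : List ℕ) :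
    (blocks p q e).map f = blocks (p.map f) (q.map f) e := by
  induction e generalizing p q with
  | nil => rfl
  | cons a e ih => simp only [blocks, map_append, map_rep, ih]

theorem blocks_append (p q xs ys : List ℕ) :
    blocks p q (xs ++ ys) =
      blocks p q xs ++ if Even xs.length then blocks p q ys else blocks q p ys := by
  induction xs generalizing p q with
  | nil => simp [blocks]
  | cons a xs ih =>
    simp only [cons_append, blocks, ih, append_assoc, length_cons, Nat.even_add_one]
    split_ifs <;> rfl

theorem length_blocks {p q : List ℕ} (hq : q.length = p.length) (e : List ℕ) :
    (blocks p q e).length = p.length * e.sum := by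
  induction e generalizing p q with
  | nil => simp [blocks]
  | cons a e ih =>
    simp only [blocks, length_append, length_rep, ih hq.symm, hq, sum_cons]
    ring

theorem mem_blocks {p q e : List ℕ} {x : ℕ} (hx : x ∈ blocks p q e) :
    x ∈ p ∨ x ∈ q := by
  induction e generalizing p q with
  | nil => simp [blocks] at hx
  | cons a e ih =>
    rcases mem_append.1 hx with hx | hx
    · simp only [rep, mem_flatten, mem_replicate] at hx
      obtain ⟨l, ⟨_, rfl⟩, hxl⟩ := hx
      exact .inl hxl
    · exact (ih hx).symm

theorem blocks_sublist_flatten {p q e : List ℕ} {qs : List (List ℕ)}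
    (hq : q.length = p.length) (hlen : p.length * e.sum ≤ qs.length)
    (hsub : ∀ r ∈ qs, p ⊆ r ∧ q ⊆ r) : blocks p q e <+ qs.flatten :=
  sublist_flatten_of_forall_subset (by rwa [length_blocks hq]) fun r hr _ hx =>
    (mem_blocks hx).elim (fun h => (hsub r hr).1 h) (fun h => (hsub r hr).2 h)

theorem le_length_filter_or_le_length_filter {α : Type*} [DecidableEq α] {V W : List α}
    {qs : List (List α)} (hqs : ∀ q ∈ qs, V <+ q ∨ W <+ q) {a : ℕ}
    (hlen : 2 * a - 1 ≤ qs.length) :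
    a ≤ (qs.filter (V <+ ·)).length ∨ a ≤ (qs.filter (W <+ ·)).length := by
  have hcount := length_eq_countP_add_countP (fun q => decide (V <+ q)) (l := qs)
  have hmono : qs.countP (fun q => ¬decide (V <+ q)) ≤ qs.countP (W <+ ·) :=
    countP_mono_left fun q hq hV =>
      decide_eq_true ((hqs q hq).resolve_left (by simpa using hV))
  simp only [countP_eq_length_filter] at hcount hmono
  omega

theorem exists_blocks_sublist_flatten {L : List ℕ} {qs : List (List ℕ)}
    (hqs : ∀ q ∈ qs, L <+ q ∨ L.reverse <+ q) (t₁ t₂ : List ℕ) (a : ℕ)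
    (hlen : L.length * (t₁.sum + t₂.sum) + (2 * a - 1) ≤ qs.length) :
    ∃ X, (X = L ∨ X = L.reverse) ∧ blocks X X.reverse (t₁ ++ a :: t₂) <+ qs.flatten := by
  have hsub : ∀ X, (X = L ∨ X = L.reverse) → ∀ q ∈ qs, X ⊆ q ∧ X.reverse ⊆ q := by
    intro X hX q hq
    have hL : L ⊆ q := (hqs q hq).elim Sublist.subset fun h => by simpa using h.subset
    rcases hX with rfl | rfl <;> simpa using hL
  have hlength : ∀ X, (X = L ∨ X = L.reverse) → X.length = L.length := by
    rintro X (rfl | rfl) <;> simp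
  rw [Nat.mul_add] at hlen
  set qs₁ := qs.take (L.length * t₁.sum)
  set qs₂ := (qs.drop (L.length * t₁.sum)).take (2 * a - 1)
  set qs₃ := (qs.drop (L.length * t₁.sum)).drop (2 * a - 1)
  have hqs₂ : ∀ q ∈ qs₂, q ∈ qs := fun q hq =>
    ((take_sublist _ _).trans (drop_sublist _ _)).subset hq
  obtain ⟨V, hV, hVa⟩ :
      ∃ V, (V = L ∨ V = L.reverse) ∧ a ≤ (qs₂.filter (V <+ ·)).length := by
    rcases le_length_filter_or_le_length_filter (a := a) (fun q hq => hqs q (hqs₂ q hq))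
      (by simp [qs₂]; omega) with h | h
    exacts [⟨L, .inl rfl, h⟩, ⟨L.reverse, .inr rfl, h⟩]
  -- orient `X` so that the block of exponent `a` is `V`
  let X := if Even t₁.length then V else V.reverse
  have hX : X = L ∨ X = L.reverse := by
    rcases hV with rfl | rfl <;> by_cases h : Even t₁.length <;> simp [X, h]
  have hmid : (if Even t₁.length then blocks X X.reverse (a :: t₂)
      else blocks X.reverse X (a :: t₂)) = rep V a ++ blocks V.reverse V t₂ := by
    by_cases h : Even t₁.length <;> simp [X, h, blocks]
  refine ⟨X, hX, ?_⟩
  have hsplit : qs = qs₁ ++ qs₂ ++ qs₃ := by simp [qs₁, qs₂, qs₃]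
  rw [blocks_append, hmid, ← append_assoc, hsplit, flatten_append, flatten_append]
  refine ((blocks_sublist_flatten (by simp) ?_ fun r hr => ?_).append
    (rep_sublist_flatten hVa)).append (blocks_sublist_flatten (by simp) ?_ fun r hr => ?_)
  · simp only [qs₁, length_take, hlength X hX]
    omega
  · exact hsub X hX r ((take_sublist _ _).subset hr)
  · simp only [qs₃, length_drop, length_reverse, hlength V hV]
    omega
  · simpa [and_comm] using hsub V hV r (((drop_sublist _ _).trans (drop_sublist _ _)).subset hr)

theorem exists_injective_map_Ic_eq {X : List ℕ} (hX : X.Nodup) :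
    ∃ f : ℕ → ℕ, f.Injective ∧
      (Ic X.length).map f = X ∧ (Dc X.length).map f = X.reverse := by
  -- outside `1, …, X.length`, shift past every letter of `X`
  let f x := if h : 1 ≤ x ∧ x ≤ X.length then X[x - 1] else X.sum + 1 + x
  have hI : (Ic X.length).map f = X := by
    refine ext_getElem (by simp [Ic]) fun i h₁ h₂ => ?_
    simp only [Ic, getElem_map, getElem_range', f]
    rw [dif_pos (by omega)]
    simp
  have hf_le : ∀ x, 1 ≤ x ∧ x ≤ X.length → f x ≤ X.sum := fun x hx => by
    simpa only [f, dif_pos hx] using le_sum_of_mem (getElem_mem _)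
  refine ⟨f, fun x y hxy => ?_, hI, by rw [Dc, map_reverse, hI]⟩
  by_cases hx : 1 ≤ x ∧ x ≤ X.length <;> by_cases hy : 1 ≤ y ∧ y ≤ X.length
  · simp only [f, dif_pos hx, dif_pos hy, hX.getElem_inj_iff] at hxy
    omega
  · have := hf_le x hx
    simp only [f, dif_neg hy] at hxy this
    omega
  · have := hf_le y hy
    simp only [f, dif_neg hx] at hxy this
    omega
  · simp only [f, dif_neg hx, dif_neg hy] at hxy
    omega

theorem stmt9_general (c : ℕ) (e : List ℕ) (he : ∀ x ∈ e, 0 < x)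
    (m : ℕ) (hm : m < e.length) :
    fw (altBlocks c e) ≤ c * (e.sum - e.get ⟨m, hm⟩) + 2 * e.get ⟨m, hm⟩ - 1 := by
  set a := e.get ⟨m, hm⟩
  have ha : 0 < a := he a (get_mem e _)
  have he_split : e.take m ++ a :: e.drop (m + 1) = e := by
    simp [a, ← drop_eq_getElem_cons hm]
  have hsum : e.sum - a = (e.take m).sum + (e.drop (m + 1)).sum := by
    conv_lhs => rw [← he_split]
    simp only [sum_append, sum_cons]
    omega
  refine Nat.sInf_le ⟨(fun n => (n + n).choose n)^[c * (e.sum - a) + 2 * a - 1] c, ?_⟩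
  rintro _ ⟨A, ps, hA, hps, hperm, rfl⟩
  obtain ⟨L, hLA, hL, hLps⟩ := exists_sublist_forall_sublist_or_reverse_sublist c ps
    A.nodup_toList (by rw [hps, Finset.length_toList, hA]) fun q hq =>
      ⟨(hperm q hq).1, fun x hx => mem_toFinset.1 ((hperm q hq).2 ▸ Finset.mem_toList.1 hx)⟩
  obtain ⟨X, hX, hXps⟩ := exists_blocks_sublist_flatten hLps (e.take m) (e.drop (m + 1)) a
    (by rw [hps, hsum, hL]; omega)
  have hXnd : X.Nodup := by
    rcases hX with rfl | rfl
    exacts [A.nodup_toList.sublist hLA, nodup_reverse.2 (A.nodup_toList.sublist hLA)]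
  have hXc : X.length = c := by rcases hX with rfl | rfl <;> simpa using hL
  obtain ⟨f, hf, hI, hD⟩ := exists_injective_map_Ic_eq hXnd
  rw [hXc] at hI hD
  refine ⟨f, hf, ?_⟩
  rwa [altBlocks_eq_blocks, map_blocks, hI, hD, ← he_split]

theorem stmt9 (c : ℕ) (hc : 2 ≤ c) (e : List ℕ) (he : ∀ x ∈ e, 0 < x)
    (m : ℕ) (hm : m < e.length) :
    fw (altBlocks c e) ≤ c * (e.sum - e.get ⟨m, hm⟩) + 2 * e.get ⟨m, hm⟩ - 1 :=
  stmt9_general c e he m hm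
end
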